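/- Let H be a history satisfying uniqueness of written values, containing a transaction WOT whose write events are exactly w(o_1)x_1, ..., w(o_n)x_n for pairwise distinct objects o_1, ..., o_n (n ≥ 2). Suppose the local history of a client C_r contains a transaction ROT with read events r(o_i)a_i for every i ∈ {1, ..., n}, and strictly later a transaction ROT2 with read events r(o_i)x_i for every i ∈ {1, ..., n}. If a transactional causal serialization for C_r of H exists, then either a_i = x_i for all i, or a_i ≠ x_i for all i; that is, a read-only transaction returning the value written by WOT to one of the objects must return the value written by WOT to every one of the objects. -/

import Mathlib

/-!
Combinatorial model of transactional histories.
-/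

/-- A transaction: a finite set of read events `(x, v)` (read of object `x`
returning value `v`) and a finite set of write events `(x, v)` (write of
value `v` to object `x`). -/
structure Tx (Obj : Type*) (Val : Type*) where
  reads : Set (Obj × Val)
  writes : Set (Obj × Val)
  reads_finite : reads.Finite
  writes_finite : writes.Finite

/-- A history: a set of clients, each with a finite sequence (list) of
transactions — its local history. -/
structure History (Client : Type*) (Obj : Type*) (Val : Type*) where
  locals : Client → List (Tx Obj Val)

variable {Client Obj Val : Type*}

/-- `T` is a transaction of the history `H`. -/
def TxIn (H : History Client Obj Val) (T : Tx Obj Val) : Prop :=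
  ∃ c : Client, T ∈ H.locals c

/-- `S` occurs strictly before `T` in the local history of client `c`. -/
def LocBefore (H : History Client Obj Val) (c : Client) (S T : Tx Obj Val) : Prop :=
  ∃ i j : ℕ, i < j ∧ (H.locals c)[i]? = some S ∧ (H.locals c)[j]? = some T

/-- `T` contains a write event on object `x`. -/
def WritesOn (T : Tx Obj Val) (x : Obj) : Prop :=
  ∃ v : Val, (x, v) ∈ T.writes

/-- Uniqueness of written values: every value written by a write event of the
history is distinct from `bot` and from the value written by every other
write event in the history. -/
def UniqueWrites (H : History Client Obj Val) (bot : Val) : Prop :=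
  (∀ T, TxIn H T → ∀ x v, (x, v) ∈ T.writes → v ≠ bot) ∧
  (∀ T T', TxIn H T → TxIn H T' → ∀ x x' v,
      (x, v) ∈ T.writes → (x', v) ∈ T'.writes → T = T' ∧ x = x')

/-- The causality relation of a history: the smallest transitive relation such
that `S` causally precedes `T` whenever (i) `S` occurs strictly before `T` in
some client's local history, or (ii) `S` contains a write event `w(x)v` and
`T` contains the read event `r(x)v`. -/
inductive Causal (H : History Client Obj Val) : Tx Obj Val → Tx Obj Val → Prop
  | prog {S T : Tx Obj Val} (c : Client) : LocBefore H c S T → Causal H S T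
  | readFrom {S T : Tx Obj Val} {x : Obj} {v : Val} :
      TxIn H S → TxIn H T → (x, v) ∈ S.writes → (x, v) ∈ T.reads → Causal H S T
  | trans {S T U : Tx Obj Val} : Causal H S T → Causal H T U → Causal H S U

/-- The set of transactions over which a serialization for client `C` ranges:
all transactions of the history containing at least one write event, together
with all transactions of `C`'s local history. -/
def Dom (H : History Client Obj Val) (C : Client) : Set (Tx Obj Val) :=
  {T | (TxIn H T ∧ T.writes.Nonempty) ∨ T ∈ H.locals C}

/-- `lt` is a transactional causal serialization for client `C` of history `H`:
a strict linear order on `Dom H C` such that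
(1) for every read event `r(x)v` with `v ≠ bot` in a transaction `T` of the
set, some transaction strictly preceding `T` contains a write event on `x`,
and the last such transaction contains the write event `w(x)v`;
(2) for every read event `r(x)bot` in a transaction `T` of the set, no
transaction strictly preceding `T` contains a write event on `x`;
(3) whenever a transaction `S` of the set causally precedes a transaction `T`
of the set, `S` strictly precedes `T`. -/
structure IsCausalSerialization (H : History Client Obj Val) (bot : Val)
    (C : Client) (lt : Tx Obj Val → Tx Obj Val → Prop) : Prop where
  irrefl : ∀ T ∈ Dom H C, ¬ lt T T
  trans : ∀ S ∈ Dom H C, ∀ T ∈ Dom H C, ∀ U ∈ Dom H C, lt S T → lt T U → lt S U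
  total : ∀ S ∈ Dom H C, ∀ T ∈ Dom H C, S ≠ T → lt S T ∨ lt T S
  read_val : ∀ T ∈ Dom H C, ∀ x v, (x, v) ∈ T.reads → v ≠ bot →
      ∃ W ∈ Dom H C, lt W T ∧ (x, v) ∈ W.writes ∧
        ∀ W' ∈ Dom H C, lt W' T → WritesOn W' x → W' = W ∨ lt W' W
  read_bot : ∀ T ∈ Dom H C, ∀ x, (x, bot) ∈ T.reads →
      ∀ W ∈ Dom H C, lt W T → ¬ WritesOn W x
  causal_lt : ∀ S ∈ Dom H C, ∀ T ∈ Dom H C, Causal H S T → lt S T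

/-!
Suppose `ROT` returns `x i` for `o i` but some `a j ≠ x j` for `o j`. Reading from `WOT` puts
`WOT` before `ROT`, so the value `a j` must come from a later writer `W` of `o j`, with
`WOT < W < ROT`. But `W` causally precedes `ROT2` (via `ROT`), and `ROT2` reads `x j` from
`WOT`, so `WOT` must be the last writer of `o j` before `ROT2`, contradicting `WOT < W`.
-/

theorem txIn_of_mem_dom {H : History Client Obj Val} {C : Client} {T : Tx Obj Val}
    (hT : T ∈ Dom H C) : TxIn H T :=
  hT.elim And.left fun h => ⟨C, h⟩

namespace LocBefore

variable {H : History Client Obj Val} {c : Client} {S T : Tx Obj Val}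

theorem mem_left (h : LocBefore H c S T) : S ∈ H.locals c :=
  let ⟨i, _, _, hi, _⟩ := h
  List.mem_iff_getElem?.mpr ⟨i, hi⟩

theorem mem_right (h : LocBefore H c S T) : T ∈ H.locals c :=
  let ⟨_, j, _, _, hj⟩ := h
  List.mem_iff_getElem?.mpr ⟨j, hj⟩

end LocBefore

namespace IsCausalSerialization

variable {H : History Client Obj Val} {bot : Val} {C : Client}
  {lt : Tx Obj Val → Tx Obj Val → Prop} {S T W W' : Tx Obj Val} {x : Obj} {v : Val}

theorem asymm (hS : IsCausalSerialization H bot C lt) (hSd : S ∈ Dom H C) (hTd : T ∈ Dom H C)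
    (hST : lt S T) : ¬ lt T S :=
  fun hTS => hS.irrefl S hSd (hS.trans S hSd T hTd S hSd hST hTS)

theorem lt_of_readFrom (hS : IsCausalSerialization H bot C lt) (hWd : W ∈ Dom H C)
    (hTd : T ∈ Dom H C) (hw : (x, v) ∈ W.writes) (hr : (x, v) ∈ T.reads) : lt W T :=
  hS.causal_lt W hWd T hTd (.readFrom (txIn_of_mem_dom hWd) (txIn_of_mem_dom hTd) hw hr)

theorem exists_overwrite_of_reads (hS : IsCausalSerialization H bot C lt) (hTd : T ∈ Dom H C)
    (hr : (x, v) ∈ T.reads) (hWd : W ∈ Dom H C) (hWT : lt W T) (hWx : WritesOn W x)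
    (hWv : (x, v) ∉ W.writes) :
    ∃ W' ∈ Dom H C, lt W W' ∧ lt W' T ∧ (x, v) ∈ W'.writes := by
  by_cases hv : v = bot
  · subst hv
    exact (hS.read_bot T hTd x hr W hWd hWT hWx).elim
  obtain ⟨W', hW'd, hW'T, hW'v, hlast⟩ := hS.read_val T hTd x v hr hv
  rcases hlast W hWd hWT hWx with rfl | hWW'
  · exact (hWv hW'v).elim
  · exact ⟨W', hW'd, hWW', hW'T, hW'v⟩

theorem eq_or_lt_writer_of_reads (hS : IsCausalSerialization H bot C lt)
    (hU : UniqueWrites H bot) (hTd : T ∈ Dom H C) (hr : (x, v) ∈ T.reads) (hW : TxIn H W)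
    (hWv : (x, v) ∈ W.writes)
    (hW'd : W' ∈ Dom H C) (hW'T : lt W' T) (hW'x : WritesOn W' x) : W' = W ∨ lt W' W := by
  obtain ⟨W₀, hW₀d, -, hW₀v, hlast⟩ := hS.read_val T hTd x v hr (hU.1 W hW x v hWv)
  obtain rfl := (hU.2 W₀ W (txIn_of_mem_dom hW₀d) hW x x v hW₀v hWv).1
  exact hlast W' hW'd hW'T hW'x

theorem not_reads_after_overwrite (hS : IsCausalSerialization H bot C lt)
    (hU : UniqueWrites H bot) {T₁ T₂ : Tx Obj Val} (h₁₂ : LocBefore H C T₁ T₂)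
    {y : Obj} {u w : Val} (hWd : W ∈ Dom H C) (hWu : (y, u) ∈ W.writes)
    (hWw : (x, w) ∈ W.writes) (hWv : (x, v) ∉ W.writes)
    (hr₁u : (y, u) ∈ T₁.reads) (hr₁v : (x, v) ∈ T₁.reads) : (x, w) ∉ T₂.reads := by
  intro hr₂
  have hT₁d : T₁ ∈ Dom H C := Or.inr h₁₂.mem_left
  have hT₂d : T₂ ∈ Dom H C := Or.inr h₁₂.mem_right
  obtain ⟨W', hW'd, hWW', -, hW'v⟩ := hS.exists_overwrite_of_reads hT₁d hr₁v hWd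
    (hS.lt_of_readFrom hWd hT₁d hWu hr₁u) ⟨w, hWw⟩ hWv
  have hW'T₂ : lt W' T₂ := hS.causal_lt W' hW'd T₂ hT₂d <|
    .trans (.readFrom (txIn_of_mem_dom hW'd) (txIn_of_mem_dom hT₁d) hW'v hr₁v) (.prog C h₁₂)
  rcases hS.eq_or_lt_writer_of_reads hU hT₂d hr₂ (txIn_of_mem_dom hWd) hWw hW'd hW'T₂
    ⟨v, hW'v⟩ with rfl | hW'W
  · exact hS.irrefl W' hW'd hWW'
  · exact hS.asymm hWd hW'd hWW' hW'W

end IsCausalSerialization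

theorem stmt_4_general {Client Obj Val : Type*} (bot : Val)
    (H : History Client Obj Val) (hU : UniqueWrites H bot)
    (WOT : Tx Obj Val) (hWOT : TxIn H WOT)
    (n : ℕ)
    (o : Fin n → Obj) (ho : Function.Injective o)
    (x a : Fin n → Val)
    (hw : WOT.writes = Set.range fun i => (o i, x i))
    (Cr : Client) (ROT ROT2 : Tx Obj Val)
    (hord : LocBefore H Cr ROT ROT2)
    (hra : ∀ i, (o i, a i) ∈ ROT.reads)
    (hr2 : ∀ i, (o i, x i) ∈ ROT2.reads) :
    (∃ lt : Tx Obj Val → Tx Obj Val → Prop,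
        IsCausalSerialization H bot Cr lt) →
      (∀ i, a i = x i) ∨ (∀ i, a i ≠ x i) := by
  rintro ⟨lt, hS⟩
  by_contra! ⟨⟨j, hj⟩, i, hi⟩
  have hwrites (k : Fin n) : (o k, x k) ∈ WOT.writes := hw ▸ ⟨k, rfl⟩
  have hnot_writes : (o j, a j) ∉ WOT.writes := by
    rw [hw]
    rintro ⟨k, hk⟩
    obtain ⟨hko, hkx⟩ := Prod.mk.inj hk
    exact hj (ho hko ▸ hkx).symm
  exact hS.not_reads_after_overwrite hU hord (Or.inl ⟨hWOT, _, hwrites i⟩) (hwrites i)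
    (hwrites j) hnot_writes (hi ▸ hra i) (hra j) (hr2 j)

/-- a read-only transaction returning the value written by `WOT`
to one of the objects must return the value written by `WOT` to every one of
the objects. -/
theorem stmt_4 {Client Obj Val : Type*} (bot : Val)
    (H : History Client Obj Val) (hU : UniqueWrites H bot)
    (WOT : Tx Obj Val) (hWOT : TxIn H WOT)
    (n : ℕ) (hn : 2 ≤ n)
    (o : Fin n → Obj) (ho : Function.Injective o)
    (x a : Fin n → Val)
    (hw : WOT.writes = Set.range fun i => (o i, x i))
    (Cr : Client) (ROT ROT2 : Tx Obj Val)
    (hord : LocBefore H Cr ROT ROT2)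
    (hra : ∀ i, (o i, a i) ∈ ROT.reads)
    (hr2 : ∀ i, (o i, x i) ∈ ROT2.reads) :
    (∃ lt : Tx Obj Val → Tx Obj Val → Prop,
        IsCausalSerialization H bot Cr lt) →
      (∀ i, a i = x i) ∨ (∀ i, a i ≠ x i) :=
  stmt_4_general bot H hU WOT hWOT n o ho x a hw Cr ROT ROT2 hord hra hr2
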